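/- arXiv:2112.12075 — 2 statements merged into one kernel-verified Lean document; each statement's English description precedes it below -/
import Mathlib

section
/- Let α, a, x, y, z, t ∈ ℂ with |xt| < 1, |zt| < 1 and |z t q^{α}| < 1, and suppose y ≠ x q^{j+1−n} for all integers n ≥ 1 and 0 ≤ j ≤ n−1 (so every p_k(y, x q^{1−n}) appearing below is nonzero). Then ∑_{n=0}^∞ (p_n(x,y) t^n/(q;q)_n) · ∑_{k=0}^n [n k]_q [α k]_{−q} (−1)^k q^{k(k−n)} (a;q)_k z^k / p_k(y, x q^{1−n}) converges absolutely and equals ((yt;q)_∞/(xt;q)_∞) · ₂Φ₁[−q^{−α}, a; −q; q; z t q^{α}]. -/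
noncomputable section

/-- The q-shifted factorial `(a;q)_n`. -/
def qPoch (q a : ℂ) (n : ℕ) : ℂ := ∏ j ∈ Finset.range n, (1 - a * q ^ j)

/-- The infinite q-shifted factorial `(a;q)_∞`. -/
def qPochInf (q a : ℂ) : ℂ := ∏' j : ℕ, (1 - a * q ^ j)

/-- The q-binomial coefficient `[n k]_q`. -/
def qBinom (q : ℂ) (n k : ℕ) : ℂ := qPoch q q n / (qPoch q q k * qPoch q q (n - k))

/-- The Cauchy polynomials `p_n(x,y)`. -/
def cauchyP (q x y : ℂ) (n : ℕ) : ℂ := ∏ j ∈ Finset.range n, (x - q ^ j * y)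

/-- The generalized q-binomial coefficient `[α k]_{-q}`. -/
def genQBinom (q α : ℂ) (k : ℕ) : ℂ :=
  qPoch q (-(q ^ (-α))) k / qPoch q (-q) k * q ^ (α * (k : ℂ) - (k.choose 2 : ℂ))

/-- The generalized q-polynomials `L̃_n^{(r,s)}(α,x,y,z,a)`. -/
def Ltil (q : ℂ) (r s : ℤ) (α x y z a : ℂ) (n : ℕ) : ℂ :=
  ∑ k ∈ Finset.range (n + 1),
    qBinom q n k * genQBinom q α k *
      q ^ (r * (k.choose 2 : ℤ) - s * ((k + 1).choose 2 : ℤ) + (k.choose 2 : ℤ)) *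
      qPoch q a k * cauchyP q x y (n - k) * z ^ k

/-- The basic hypergeometric series `₂Φ₁[a,b;c;q;z]`. -/
def Phi21 (q a b c z : ℂ) : ℂ :=
  ∑' n : ℕ, qPoch q a n * qPoch q b n / (qPoch q c n * qPoch q q n) * z ^ n

/-- The basic hypergeometric series `₄Φ₃`. -/
def Phi43 (q a₁ a₂ a₃ a₄ b₁ b₂ b₃ z : ℂ) : ℂ :=
  ∑' n : ℕ, qPoch q a₁ n * qPoch q a₂ n * qPoch q a₃ n * qPoch q a₄ n /
    (qPoch q b₁ n * qPoch q b₂ n * qPoch q b₃ n * qPoch q q n) * z ^ n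

/-- The trivariate q-polynomials `F_n(x,y,z;q)`. -/
def Ftri (q x y z : ℂ) (n : ℕ) : ℂ :=
  (-1) ^ n * q ^ (-(n.choose 2 : ℤ)) *
    ∑ k ∈ Finset.range (n + 1),
      qBinom q n k * q ^ (k.choose 2) * (-z) ^ k * cauchyP q y x (n - k)

/-- The Hahn (Al-Salam–Carlitz) polynomials `φ_n^{(σ)}(x|q)`. -/
def hahnPhi (q σ x : ℂ) (n : ℕ) : ℂ :=
  ∑ k ∈ Finset.range (n + 1), qBinom q n k * qPoch q σ k * x ^ k

/-- The q-derivative operator `D_a`. -/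
def Dq (q : ℂ) (f : ℂ → ℂ) : ℂ → ℂ := fun a => (f a - f (q * a)) / a

/-- The homogeneous q-difference operator `D_{xy}`. -/
def Dxy (q : ℂ) (f : ℂ → ℂ → ℂ) : ℂ → ℂ → ℂ :=
  fun x y => (f x (y / q) - f (q * x) y) / (x - y / q)

/-!
Two facts drive the proof. First, the reflection identity
`p_k(y, x q^{1-n}) p_{n-k}(x,y) = (-1)^k q^{C(k,2) + k(1-n)} p_n(x,y)` makes the `n`-th summand the
`n`-th coefficient of the Cauchy product of the `₂Φ₁` series in `z t q^α` with the series
`G(t) = ∑ p_m(x,y) t^m / (q;q)_m`; both converge absolutely by the ratio test. Second, the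
`q`-binomial theorem `G(t) = (yt;q)_∞ / (xt;q)_∞`: comparing coefficients gives
`(1 - x s) G(s) = (1 - y s) G(q s)`, so `(xt;q)_N G(t) = (yt;q)_N G(q^N t)`, and `G(q^N t) → 1`.
-/

open Finset Filter Topology

section

variable {q : ℂ}

lemma qPoch_succ (q a : ℂ) (n : ℕ) : qPoch q a (n + 1) = qPoch q a n * (1 - a * q ^ n) :=
  prod_range_succ _ _

lemma cauchyP_succ (q x y : ℂ) (n : ℕ) :
    cauchyP q x y (n + 1) = cauchyP q x y n * (x - q ^ n * y) :=
  prod_range_succ _ _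

lemma norm_pow_le_one (hq : ‖q‖ ≤ 1) (n : ℕ) : ‖q ^ n‖ ≤ 1 := by
  simpa using pow_le_one₀ (norm_nonneg q) hq

lemma norm_mul_pow_lt_one (hq : ‖q‖ ≤ 1) {w : ℂ} (hw : ‖w‖ < 1) (j : ℕ) :
    ‖w * q ^ j‖ < 1 := by
  rw [norm_mul]
  exact mul_lt_one_of_nonneg_of_lt_one_left (norm_nonneg w) hw (norm_pow_le_one hq j)

lemma norm_mul_mul_lt_one {u x s : ℂ} (hu : ‖u‖ ≤ 1) (hxs : ‖x * s‖ < 1) :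
    ‖x * (u * s)‖ < 1 := by
  rw [mul_left_comm, norm_mul]
  exact (mul_le_of_le_one_left (norm_nonneg _) hu).trans_lt hxs

lemma one_sub_mul_pow_ne_zero (hq : ‖q‖ ≤ 1) {w : ℂ} (hw : ‖w‖ < 1) (j : ℕ) :
    1 - w * q ^ j ≠ 0 := by
  intro h
  simpa [← eq_of_sub_eq_zero h] using norm_mul_pow_lt_one hq hw j

lemma qPoch_ne_zero (hq : ‖q‖ ≤ 1) {a : ℂ} (ha : ‖a‖ < 1) (n : ℕ) : qPoch q a n ≠ 0 :=
  prod_ne_zero_iff.mpr fun j _ => one_sub_mul_pow_ne_zero hq ha j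

lemma summable_norm_neg_mul_pow (hq : ‖q‖ < 1) (w : ℂ) :
    Summable fun j : ℕ => ‖-(w * q ^ j)‖ := by
  simpa [norm_mul, norm_pow] using
    (summable_geometric_of_lt_one (norm_nonneg q) hq).mul_left ‖w‖

lemma tendsto_qPoch_qPochInf (hq : ‖q‖ < 1) (w : ℂ) :
    Tendsto (qPoch q w) atTop (𝓝 (qPochInf q w)) := by
  have h := multipliable_one_add_of_summable (summable_norm_neg_mul_pow hq w)
  simp only [← sub_eq_add_neg] at h
  exact h.hasProd.tendsto_prod_nat

lemma qPochInf_ne_zero (hq : ‖q‖ < 1) {w : ℂ} (hw : ‖w‖ < 1) : qPochInf q w ≠ 0 := by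
  have h := tprod_one_add_ne_zero_of_summable
    (fun j => by simpa [← sub_eq_add_neg] using one_sub_mul_pow_ne_zero hq.le hw j)
    (summable_norm_neg_mul_pow hq w)
  simpa only [qPochInf, ← sub_eq_add_neg] using h

lemma summable_norm_of_succ_eq_mul {R : Type*} [NormedRing R] {F r : ℕ → R} {L : R}
    (hL : ‖L‖ < 1) (hr : Tendsto r atTop (𝓝 L)) (hF : ∀ k, F (k + 1) = r k * F k) :
    Summable fun k => ‖F k‖ := by
  obtain ⟨ρ, hLρ, hρ⟩ := exists_between hL
  refine summable_of_ratio_norm_eventually_le hρ ?_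
  filter_upwards [hr.norm.eventually (gt_mem_nhds hLρ)] with k hk
  rw [norm_norm, norm_norm, hF]
  exact (norm_mul_le _ _).trans (mul_le_mul_of_nonneg_right hk.le (norm_nonneg _))

lemma tendsto_comp_pow_atTop (hq : ‖q‖ < 1) {φ : ℂ → ℂ} (hφ : ContinuousAt φ 0) :
    Tendsto (fun n : ℕ => φ (q ^ n)) atTop (𝓝 (φ 0)) :=
  hφ.tendsto.comp (tendsto_pow_atTop_nhds_zero_of_norm_lt_one hq)

def phi21Term (q a b c z : ℂ) (n : ℕ) : ℂ :=
  qPoch q a n * qPoch q b n / (qPoch q c n * qPoch q q n) * z ^ n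

def cauchyTerm (q x y t : ℂ) (n : ℕ) : ℂ := cauchyP q x y n * t ^ n / qPoch q q n

lemma phi21Term_succ (q a b c z : ℂ) (n : ℕ) :
    phi21Term q a b c z (n + 1) =
      (1 - a * q ^ n) * (1 - b * q ^ n) / ((1 - c * q ^ n) * (1 - q * q ^ n)) * z *
        phi21Term q a b c z n := by
  simp only [phi21Term, qPoch_succ, pow_succ, div_eq_mul_inv, mul_inv]
  ring

lemma cauchyTerm_succ (q x y t : ℂ) (n : ℕ) :
    cauchyTerm q x y t (n + 1) =
      (x - q ^ n * y) * t / (1 - q * q ^ n) * cauchyTerm q x y t n := by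
  simp only [cauchyTerm, cauchyP_succ, qPoch_succ, pow_succ, div_eq_mul_inv, mul_inv]
  ring

lemma summable_norm_phi21Term (hq : ‖q‖ < 1) (a b c : ℂ) {z : ℂ} (hz : ‖z‖ < 1) :
    Summable fun n => ‖phi21Term q a b c z n‖ := by
  refine summable_norm_of_succ_eq_mul hz ?_ (phi21Term_succ q a b c z)
  simpa using tendsto_comp_pow_atTop hq
    (φ := fun w => (1 - a * w) * (1 - b * w) / ((1 - c * w) * (1 - q * w)) * z)
    (by fun_prop (disch := simp))

lemma summable_norm_cauchyTerm (hq : ‖q‖ < 1) (x y : ℂ) {t : ℂ} (hxt : ‖x * t‖ < 1) :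
    Summable fun n => ‖cauchyTerm q x y t n‖ := by
  refine summable_norm_of_succ_eq_mul hxt ?_ (cauchyTerm_succ q x y t)
  simpa using tendsto_comp_pow_atTop hq
    (φ := fun w => (x - w * y) * t / (1 - q * w)) (by fun_prop (disch := simp))

lemma cauchyTerm_zero (q x y t : ℂ) : cauchyTerm q x y t 0 = 1 := by
  simp [cauchyTerm, cauchyP, qPoch]

lemma cauchyTerm_pow_mul (q x y t : ℂ) (N n : ℕ) :
    cauchyTerm q x y (q ^ N * t) n = cauchyTerm q x y t n * (q ^ n) ^ N := by
  simp only [cauchyTerm, mul_pow, ← pow_mul, mul_comm N]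
  ring

lemma cauchyTerm_succ_sub (hq : ‖q‖ < 1) (x y s : ℂ) (n : ℕ) :
    cauchyTerm q x y s (n + 1) - cauchyTerm q x y (q * s) (n + 1) =
      x * s * cauchyTerm q x y s n - y * s * cauchyTerm q x y (q * s) n := by
  have hqs : cauchyTerm q x y (q * s) n = cauchyTerm q x y s n * q ^ n := by
    simpa using cauchyTerm_pow_mul q x y s 1 n
  have hcancel :
      (x - q ^ n * y) * s / (1 - q * q ^ n) * (1 - q * q ^ n) = (x - q ^ n * y) * s :=
    div_mul_cancel₀ _ (one_sub_mul_pow_ne_zero hq.le hq n)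
  rw [cauchyTerm_succ, cauchyTerm_succ, hqs]
  linear_combination cauchyTerm q x y s n * hcancel

lemma one_sub_mul_tsum_cauchyTerm (hq : ‖q‖ < 1) (x y : ℂ) {s : ℂ} (hxs : ‖x * s‖ < 1) :
    (1 - x * s) * ∑' n, cauchyTerm q x y s n =
      (1 - y * s) * ∑' n, cauchyTerm q x y (q * s) n := by
  have hxqs := norm_mul_mul_lt_one hq.le hxs
  have hs := (summable_norm_cauchyTerm hq x y hxs).of_norm
  have hqs := (summable_norm_cauchyTerm hq x y hxqs).of_norm
  have hdiff : ∑' n, cauchyTerm q x y s n - ∑' n, cauchyTerm q x y (q * s) n =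
      x * s * ∑' n, cauchyTerm q x y s n - y * s * ∑' n, cauchyTerm q x y (q * s) n := by
    rw [← hs.tsum_sub hqs, (hs.sub hqs).tsum_eq_zero_add, cauchyTerm_zero, cauchyTerm_zero,
      sub_self, zero_add, tsum_congr (cauchyTerm_succ_sub hq x y s),
      (hs.mul_left _).tsum_sub (hqs.mul_left _), tsum_mul_left, tsum_mul_left]
  linear_combination hdiff

lemma qPoch_mul_tsum_cauchyTerm (hq : ‖q‖ < 1) (x y : ℂ) {t : ℂ} (hxt : ‖x * t‖ < 1)
    (N : ℕ) :
    qPoch q (x * t) N * ∑' n, cauchyTerm q x y t n =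
      qPoch q (y * t) N * ∑' n, cauchyTerm q x y (q ^ N * t) n := by
  induction N with
  | zero => simp [qPoch]
  | succ N ih =>
    have h := one_sub_mul_tsum_cauchyTerm hq x y
      (norm_mul_mul_lt_one (norm_pow_le_one hq.le N) hxt)
    rw [← mul_assoc q, ← pow_succ'] at h
    rw [qPoch_succ, qPoch_succ]
    linear_combination (1 - x * t * q ^ N) * ih + qPoch q (y * t) N * h

lemma tendsto_tsum_cauchyTerm_pow_mul (hq : ‖q‖ < 1) (x y : ℂ) {t : ℂ}
    (hxt : ‖x * t‖ < 1) :
    Tendsto (fun N : ℕ => ∑' n, cauchyTerm q x y (q ^ N * t) n) atTop (𝓝 1) := by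
  have hlim : ∀ n, Tendsto (fun N : ℕ => cauchyTerm q x y (q ^ N * t) n) atTop
      (𝓝 (if n = 0 then 1 else 0)) := by
    rintro (_ | n)
    · simp [cauchyTerm_zero]
    · have hqn : ‖q ^ (n + 1)‖ < 1 := by
        simpa using pow_lt_one₀ (norm_nonneg q) hq n.succ_ne_zero
      simp only [cauchyTerm_pow_mul, if_neg n.succ_ne_zero]
      simpa using (tendsto_pow_atTop_nhds_zero_of_norm_lt_one hqn).const_mul _
  have hbound : ∀ᶠ N : ℕ in atTop, ∀ n,
      ‖cauchyTerm q x y (q ^ N * t) n‖ ≤ ‖cauchyTerm q x y t n‖ :=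
    .of_forall fun N n => by
      rw [cauchyTerm_pow_mul, norm_mul]
      exact mul_le_of_le_one_right (norm_nonneg _)
        (norm_pow_le_one (norm_pow_le_one hq.le n) N)
  simpa [tsum_ite_eq] using tendsto_tsum_of_dominated_convergence
    (summable_norm_cauchyTerm hq x y hxt) hlim hbound

theorem tsum_cauchyTerm (hq : ‖q‖ < 1) (x y : ℂ) {t : ℂ} (hxt : ‖x * t‖ < 1) :
    ∑' n, cauchyTerm q x y t n = qPochInf q (y * t) / qPochInf q (x * t) := by
  have hlim := tendsto_nhds_unique
    (((tendsto_qPoch_qPochInf hq (x * t)).mul_const _).congr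
      (qPoch_mul_tsum_cauchyTerm hq x y hxt))
    ((tendsto_qPoch_qPochInf hq (y * t)).mul (tendsto_tsum_cauchyTerm_pow_mul hq x y hxt))
  rw [eq_div_iff (qPochInf_ne_zero hq hxt), mul_comm, hlim, mul_one]

lemma pow_mul_mul_zpow_one_sub (hq0 : q ≠ 0) (x : ℂ) (j n : ℕ) :
    q ^ j * (x * q ^ (1 - (n : ℤ))) = x * q ^ ((j : ℤ) + 1 - n) := by
  rw [mul_left_comm, ← zpow_natCast, ← zpow_add₀ hq0]
  ring_nf

lemma sub_pow_mul_mul_zpow_one_sub (hq0 : q ≠ 0) (x y : ℂ) {k n : ℕ} (hk : k < n) :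
    y - q ^ k * (x * q ^ (1 - (n : ℤ))) =
      -q ^ ((k : ℤ) + 1 - n) * (x - q ^ (n - (k + 1)) * y) := by
  have hinv : q ^ ((k : ℤ) + 1 - n) * q ^ (n - (k + 1)) = 1 := by
    rw [← zpow_natCast, ← zpow_add₀ hq0, Nat.cast_sub hk, Nat.cast_succ]
    ring_nf
    exact zpow_zero q
  rw [pow_mul_mul_zpow_one_sub hq0]
  linear_combination -y * hinv

lemma cauchyP_shift_mul_cauchyP (hq0 : q ≠ 0) (x y : ℂ) {k n : ℕ} (hk : k ≤ n) :
    cauchyP q y (x * q ^ (1 - (n : ℤ))) k * cauchyP q x y (n - k) =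
      (-1) ^ k * q ^ ((k.choose 2 : ℤ) + k * (1 - (n : ℤ))) * cauchyP q x y n := by
  induction k with
  | zero => simp [cauchyP]
  | succ k ih =>
    have hkn : k < n := hk
    have hexp : (((k + 1).choose 2 : ℕ) : ℤ) + (k + 1 : ℕ) * (1 - (n : ℤ)) =
        ((k.choose 2 : ℕ) : ℤ) + k * (1 - (n : ℤ)) + ((k : ℤ) + 1 - n) := by
      rw [Nat.choose_succ_succ, Nat.choose_one_right]
      push_cast
      ring
    have hsplit :
        cauchyP q x y (n - k) = cauchyP q x y (n - (k + 1)) * (x - q ^ (n - (k + 1)) * y) := by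
      rw [← cauchyP_succ, Nat.sub_add_eq, Nat.sub_add_cancel (Nat.sub_pos_of_lt hkn)]
    have ih' := ih hkn.le
    rw [hsplit] at ih'
    rw [cauchyP_succ, sub_pow_mul_mul_zpow_one_sub hq0 x y hkn, hexp, zpow_add₀ hq0]
    linear_combination (-q ^ ((k : ℤ) + 1 - n)) * ih'

lemma cauchyP_mul_div_cauchyP_shift (hq0 : q ≠ 0) (x y : ℂ) {k n : ℕ} (hk : k ≤ n)
    (hP : cauchyP q y (x * q ^ (1 - (n : ℤ))) k ≠ 0) :
    cauchyP q x y n * ((-1) ^ k * q ^ ((k : ℤ) * (k - n))) /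
        cauchyP q y (x * q ^ (1 - (n : ℤ))) k =
      cauchyP q x y (n - k) * q ^ k.choose 2 := by
  have hexp :
      (k : ℤ) * (k - n) = ((k.choose 2 : ℕ) : ℤ) + k * (1 - (n : ℤ)) + (k.choose 2 : ℕ) := by
    qify
    rw [Nat.cast_choose_two]
    ring
  rw [div_eq_iff hP, hexp, zpow_add₀ hq0, zpow_natCast]
  linear_combination (-(q ^ k.choose 2)) * cauchyP_shift_mul_cauchyP hq0 x y hk

lemma cauchyP_shift_ne_zero (hq0 : q ≠ 0) {x y : ℂ} {k n : ℕ}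
    (hy : ∀ j < k, y ≠ x * q ^ ((j : ℤ) + 1 - n)) :
    cauchyP q y (x * q ^ (1 - (n : ℤ))) k ≠ 0 :=
  prod_ne_zero_iff.mpr fun j hj => by
    rw [pow_mul_mul_zpow_one_sub hq0]
    exact sub_ne_zero.mpr (hy j (mem_range.mp hj))

lemma genQBinom_eq (hq0 : q ≠ 0) (α : ℂ) (k : ℕ) :
    genQBinom q α k =
      qPoch q (-(q ^ (-α))) k / qPoch q (-q) k * ((q ^ α) ^ k / q ^ k.choose 2) := by
  rw [genQBinom, Complex.cpow_sub _ _ hq0, Complex.cpow_natCast, mul_comm α,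
    Complex.cpow_nat_mul]

lemma summand_eq_sum_phi21Term_mul_cauchyTerm (hq0 : q ≠ 0) (hq : ‖q‖ < 1)
    (α a x y z t : ℂ) {n : ℕ} (hy : ∀ j < n, y ≠ x * q ^ ((j : ℤ) + 1 - n)) :
    cauchyP q x y n * t ^ n / qPoch q q n *
        ∑ k ∈ range (n + 1), qBinom q n k * genQBinom q α k * (-1) ^ k *
          q ^ ((k : ℤ) * ((k : ℤ) - (n : ℤ))) * qPoch q a k * z ^ k /
          cauchyP q y (x * q ^ (1 - (n : ℤ))) k =
      ∑ k ∈ range (n + 1),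
        phi21Term q (-(q ^ (-α))) a (-q) (z * t * q ^ α) k * cauchyTerm q x y t (n - k) := by
  rw [mul_sum]
  refine sum_congr rfl fun k hk => ?_
  have hkn : k ≤ n := Nat.lt_succ_iff.mp (mem_range.mp hk)
  have hP := cauchyP_shift_ne_zero hq0 fun j hj => hy j (hj.trans_le hkn)
  have hcauchy := eq_div_of_mul_eq (pow_ne_zero _ hq0)
    (cauchyP_mul_div_cauchyP_shift hq0 x y hkn hP).symm
  have ht : t ^ n = t ^ k * t ^ (n - k) := by rw [← pow_add, Nat.add_sub_cancel' hkn]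
  have hqn := qPoch_ne_zero hq.le hq n
  rw [genQBinom_eq hq0, qBinom, phi21Term, cauchyTerm, hcauchy, ht]
  field_simp
  ring

end

theorem stmt2_general (q : ℂ) (hq0 : q ≠ 0) (hq1 : ‖q‖ < 1) (α a x y z t : ℂ)
    (hxt : ‖x * t‖ < 1) (hztα : ‖z * t * q ^ α‖ < 1)
    (hy : ∀ n : ℕ, 1 ≤ n → ∀ j : ℕ, j < n → y ≠ x * q ^ ((j : ℤ) + 1 - (n : ℤ))) :
    Summable (fun n : ℕ => ‖cauchyP q x y n * t ^ n / qPoch q q n *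
        ∑ k ∈ Finset.range (n + 1), qBinom q n k * genQBinom q α k * (-1) ^ k *
          q ^ ((k : ℤ) * ((k : ℤ) - (n : ℤ))) * qPoch q a k * z ^ k /
          cauchyP q y (x * q ^ (1 - (n : ℤ))) k‖) ∧
    ∑' n : ℕ, cauchyP q x y n * t ^ n / qPoch q q n *
        ∑ k ∈ Finset.range (n + 1), qBinom q n k * genQBinom q α k * (-1) ^ k *
          q ^ ((k : ℤ) * ((k : ℤ) - (n : ℤ))) * qPoch q a k * z ^ k /
          cauchyP q y (x * q ^ (1 - (n : ℤ))) k =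
      qPochInf q (y * t) / qPochInf q (x * t) *
        Phi21 q (-(q ^ (-α))) a (-q) (z * t * q ^ α) := by
  have hsummand n := summand_eq_sum_phi21Term_mul_cauchyTerm hq0 hq1 α a x y z t
    fun j hj => hy n (by omega) j hj
  have hphi := summable_norm_phi21Term hq1 (-(q ^ (-α))) a (-q) hztα
  have hcauchy := summable_norm_cauchyTerm hq1 x y hxt
  refine ⟨(summable_norm_sum_mul_range_of_summable_norm hphi hcauchy).congr fun n => by
    rw [hsummand], ?_⟩
  rw [tsum_congr hsummand, ← tsum_mul_tsum_eq_tsum_sum_range_of_summable_norm hphi hcauchy,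
    tsum_cauchyTerm hq1 x y hxt, mul_comm]
  rfl

/-- Generating function recovering the Cauchy polynomials. -/
theorem stmt2 (q : ℂ) (hq0 : q ≠ 0) (hq1 : ‖q‖ < 1) (α a x y z t : ℂ)
    (hxt : ‖x * t‖ < 1) (hzt : ‖z * t‖ < 1) (hztα : ‖z * t * q ^ α‖ < 1)
    (hy : ∀ n : ℕ, 1 ≤ n → ∀ j : ℕ, j < n → y ≠ x * q ^ ((j : ℤ) + 1 - (n : ℤ))) :
    Summable (fun n : ℕ => ‖cauchyP q x y n * t ^ n / qPoch q q n *
        ∑ k ∈ Finset.range (n + 1), qBinom q n k * genQBinom q α k * (-1) ^ k *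
          q ^ ((k : ℤ) * ((k : ℤ) - (n : ℤ))) * qPoch q a k * z ^ k /
          cauchyP q y (x * q ^ (1 - (n : ℤ))) k‖) ∧
    ∑' n : ℕ, cauchyP q x y n * t ^ n / qPoch q q n *
        ∑ k ∈ Finset.range (n + 1), qBinom q n k * genQBinom q α k * (-1) ^ k *
          q ^ ((k : ℤ) * ((k : ℤ) - (n : ℤ))) * qPoch q a k * z ^ k /
          cauchyP q y (x * q ^ (1 - (n : ℤ))) k =
      qPochInf q (y * t) / qPochInf q (x * t) *
        Phi21 q (-(q ^ (-α))) a (-q) (z * t * q ^ α) :=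
  stmt2_general q hq0 hq1 α a x y z t hxt hztα hy

end
end

section
/- Let x, y, t ∈ ℂ and k ∈ ℕ. Assume x t q^m ≠ 1 for all integers m ≥ 0, and q^i x ≠ q^{−j−1} y for all integers i, j ≥ 0 with i + j ≤ k − 1 (so all denominators arising in the k iterations are nonzero). Then D_{xy}^k{ (yt;q)_∞/(xt;q)_∞ } = t^k · (yt;q)_∞/(xt;q)_∞. -/
/-!
The function `F(x, y) = (yt;q)_∞ / (xt;q)_∞` is an eigenfunction of `D_{xy}` with
eigenvalue `t`: peeling off the first factor of each product via
`(a;q)_∞ = (1 - a) (aq;q)_∞` gives `F(x, y/q) - F(qx, y) = t (x - y/q) F(x, y)`.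
Since `D_{xy} G` at `(x, y)` only sees `G` at `(x, y/q)` and `(qx, y)`, the iterates follow
by induction on `k`. The hypothesis on the denominators only depends on `i + j`: it says
`q^n x ≠ y` for `1 ≤ n ≤ k`, which passes from `(x, y)` to both shifted points for `k - 1`.
-/

noncomputable section

section QPochInf

variable {q : ℂ}

lemma summable_norm_mul_pow (hq1 : ‖q‖ < 1) (a : ℂ) :
    Summable fun j : ℕ => ‖a * q ^ j‖ := by
  simpa [norm_mul, norm_pow] using
    (summable_geometric_of_lt_one (norm_nonneg q) hq1).mul_left ‖a‖

lemma multipliable_one_sub_mul_pow (hq1 : ‖q‖ < 1) (a : ℂ) :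
    Multipliable fun j : ℕ => 1 - a * q ^ j := by
  simpa [sub_eq_add_neg] using
    multipliable_one_add_of_summable (f := fun j : ℕ => -(a * q ^ j))
      (by simpa using summable_norm_mul_pow hq1 a)

lemma qPochInf_ne_zero_s11 (hq1 : ‖q‖ < 1) {a : ℂ} (h : ∀ j : ℕ, a * q ^ j ≠ 1) :
    qPochInf q a ≠ 0 := by
  simpa [qPochInf, sub_eq_add_neg] using
    tprod_one_add_ne_zero_of_summable (f := fun j : ℕ => -(a * q ^ j))
      (fun j => by rw [← sub_eq_add_neg, sub_ne_zero]; exact (h j).symm)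
      (by simpa using summable_norm_mul_pow hq1 a)

lemma qPochInf_eq_one_sub_mul (hq1 : ‖q‖ < 1) (a : ℂ) :
    qPochInf q a = (1 - a) * qPochInf q (a * q) := by
  have hshift : ∀ j : ℕ, 1 - a * q * q ^ j = 1 - a * q ^ (j + 1) := fun j => by ring
  simp only [qPochInf, hshift]
  simpa using tprod_eq_zero_mul' (f := fun j : ℕ => 1 - a * q ^ j)
    (by simpa [hshift] using multipliable_one_sub_mul_pow hq1 (a * q))

end QPochInf

def qPochInfRatio (q t x y : ℂ) : ℂ := qPochInf q (y * t) / qPochInf q (x * t)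

lemma Dxy_apply_eq_mul_of_eq_mul {q x y c : ℂ} {f g : ℂ → ℂ → ℂ}
    (hleft : f x (y / q) = c * g x (y / q)) (hright : f (q * x) y = c * g (q * x) y) :
    Dxy q f x y = c * Dxy q g x y := by
  simp only [Dxy, hleft, hright]
  ring

lemma Dxy_qPochInfRatio {q t x y : ℂ} (hq0 : q ≠ 0) (hq1 : ‖q‖ < 1)
    (hxt : ∀ m : ℕ, x * t * q ^ m ≠ 1) (hxy : q * x ≠ y) :
    Dxy q (qPochInfRatio q t) x y = t * qPochInfRatio q t x y := by
  have hnum : qPochInf q (y / q * t) = (1 - y / q * t) * qPochInf q (y * t) := by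
    rw [qPochInf_eq_one_sub_mul hq1, div_mul_eq_mul_div, div_mul_cancel₀ _ hq0, mul_comm y]
  have hden : qPochInf q (x * t) = (1 - x * t) * qPochInf q (q * x * t) := by
    rw [qPochInf_eq_one_sub_mul hq1]; ring_nf
  have hxt0 : 1 - t * x ≠ 0 :=
    sub_ne_zero.mpr fun h => hxt 0 (by simpa [mul_comm] using h.symm)
  have hqxt : qPochInf q (q * x * t) ≠ 0 :=
    qPochInf_ne_zero_s11 hq1 fun j => by convert hxt (j + 1) using 1; ring
  have hxy' : x - y / q ≠ 0 := by
    rw [sub_ne_zero, ne_eq, eq_div_iff hq0, mul_comm]; exact hxy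
  simp only [Dxy, qPochInfRatio, hnum, hden]
  field_simp
  ring

theorem iterate_Dxy_qPochInfRatio {q t x y : ℂ} {k : ℕ} (hq0 : q ≠ 0) (hq1 : ‖q‖ < 1)
    (hxt : ∀ m : ℕ, x * t * q ^ m ≠ 1)
    (hxy : ∀ n : ℕ, 1 ≤ n → n ≤ k → q ^ n * x ≠ y) :
    (Dxy q)^[k] (qPochInfRatio q t) x y = t ^ k * qPochInfRatio q t x y := by
  induction k generalizing x y with
  | zero => simp
  | succ k ih =>
    have hleft := ih (y := y / q) hxt fun n hn hnk h => hxy (n + 1) (by omega) (by omega)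
      (by rw [pow_succ, mul_right_comm, h, div_mul_cancel₀ _ hq0])
    have hright := ih (x := q * x) (fun m => by convert hxt (m + 1) using 1; ring)
      fun n hn hnk => by convert hxy (n + 1) (by omega) (by omega) using 1; ring
    rw [Function.iterate_succ_apply', Dxy_apply_eq_mul_of_eq_mul hleft hright,
      Dxy_qPochInfRatio hq0 hq1 hxt (by simpa using hxy 1 le_rfl (by omega)), pow_succ,
      mul_assoc]

/-- Action of the iterated homogeneous q-difference operator on
`(yt;q)_∞/(xt;q)_∞`. -/
theorem stmt11 (q : ℂ) (hq0 : q ≠ 0) (hq1 : ‖q‖ < 1) (x y t : ℂ) (k : ℕ)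
    (hxt : ∀ m : ℕ, x * t * q ^ m ≠ 1)
    (hden : ∀ i j : ℕ, i + j + 1 ≤ k → q ^ i * x ≠ q ^ (-(j : ℤ) - 1) * y) :
    ((Dxy q)^[k] (fun u w => qPochInf q (w * t) / qPochInf q (u * t))) x y =
      t ^ k * (qPochInf q (y * t) / qPochInf q (x * t)) := by
  refine iterate_Dxy_qPochInfRatio hq0 hq1 hxt fun n hn hnk h => ?_
  obtain ⟨i, rfl⟩ : ∃ i, n = i + 1 := ⟨n - 1, by omega⟩
  refine hden i 0 (by omega) ?_
  rw [← h, pow_succ, Nat.cast_zero, neg_zero, zero_sub, zpow_neg_one]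
  field_simp

end
end
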